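/- Let A : ℝ^n → ℝ^m be linear, 0 < τ ≤ 1/‖AᵀA‖, D : ℝ^n → ℝ^n nonexpansive, δ² > 1, D_δ = Id + (D − Id)/δ², and G(x) = x − τ·Aᵀ(Ax − y). Then T_δ = D_δ ∘ G is θ-averaged with θ = δ²/(2δ² − 1) ∈ (0,1). -/

import Mathlib

/-!
`D_δ = (1 - δ⁻²) • id + δ⁻² • D` is `δ⁻²`-averaged by construction, and `G` is firmly
nonexpansive (`1/2`-averaged) because `τ ‖AᵀA u‖² ≤ ‖A u‖² = ⟪u, AᵀA u⟫` when `τ ‖AᵀA‖ ≤ 1`.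
In a Hilbert space `T` is `θ`-averaged iff
`‖T x - T z‖² + (1 - θ)/θ · ‖(x - T x) - (z - T z)‖² ≤ ‖x - z‖²`. Chaining these inequalities
for the two factors and using `p q/(p + q) · ‖a + b‖² ≤ p ‖a‖² + q ‖b‖²` on the two residuals
gives the composition rule `(θ₁ + θ₂ - 2θ₁θ₂)/(1 - θ₁θ₂)`, which is `δ²/(2δ² - 1)` for
`θ₁ = δ⁻²`, `θ₂ = 1/2`.
-/

open RealInnerProductSpace InnerProduct

def IsAveraged {E : Type*} [NormedAddCommGroup E] [NormedSpace ℝ E] (θ : ℝ) (T : E → E) : Prop :=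
  ∃ R : E → E, LipschitzWith 1 R ∧ ∀ x, T x = (1 - θ) • x + θ • R x

section NormedSpace

variable {E : Type*} [NormedAddCommGroup E] [NormedSpace ℝ E]

theorem isAveraged_iff_lipschitzWith {θ : ℝ} (hθ : θ ≠ 0) {T : E → E} :
    IsAveraged θ T ↔ LipschitzWith 1 (fun x ↦ x + θ⁻¹ • (T x - x)) := by
  constructor
  · rintro ⟨R, hR, hT⟩
    have hTR : ∀ x, T x - x = θ • (R x - x) := fun x ↦ by rw [hT]; module
    simpa only [hTR, smul_smul, inv_mul_cancel₀ hθ, one_smul, add_sub_cancel] using hR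
  · intro hR
    refine ⟨_, hR, fun x ↦ ?_⟩
    rw [smul_add, smul_smul, mul_inv_cancel₀ hθ, one_smul]
    module

theorem isAveraged_relaxation {D : E → E} (hD : LipschitzWith 1 D) (θ : ℝ) :
    IsAveraged θ (fun x ↦ x + θ • (D x - x)) :=
  ⟨D, hD, fun x ↦ by module⟩

end NormedSpace

section InnerProductSpace

variable {E : Type*} [NormedAddCommGroup E] [InnerProductSpace ℝ E]

theorem norm_add_smul_sub_le_iff {c : ℝ} (hc : 0 < c) (u t : E) :
    ‖u + c • (t - u)‖ ≤ ‖u‖ ↔ ‖t‖ ^ 2 + (c - 1) * ‖u - t‖ ^ 2 ≤ ‖u‖ ^ 2 := by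
  have hlhs : ‖u + c • (t - u)‖ ^ 2 = ‖u‖ ^ 2 + c * (2 * ⟪u, t - u⟫ + c * ‖t - u‖ ^ 2) := by
    rw [norm_add_sq_real, real_inner_smul_right, norm_smul, mul_pow, Real.norm_eq_abs, sq_abs]
    ring
  have hrhs : ‖t‖ ^ 2 + (c - 1) * ‖u - t‖ ^ 2 = ‖u‖ ^ 2 + (2 * ⟪u, t - u⟫ + c * ‖t - u‖ ^ 2) := by
    have ht : ‖t‖ ^ 2 = ‖u‖ ^ 2 + 2 * ⟪u, t - u⟫ + ‖t - u‖ ^ 2 := by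
      rw [← norm_add_sq_real, add_sub_cancel]
    rw [norm_sub_rev, ht]
    ring
  rw [← sq_le_sq₀ (norm_nonneg _) (norm_nonneg _), hlhs, hrhs, add_le_iff_nonpos_right,
    add_le_iff_nonpos_right]
  exact ⟨fun h ↦ nonpos_of_mul_nonpos_right h hc, mul_nonpos_of_nonneg_of_nonpos hc.le⟩

theorem isAveraged_iff_norm_sq {θ : ℝ} (hθ : 0 < θ) {T : E → E} :
    IsAveraged θ T ↔ ∀ x z,
      ‖T x - T z‖ ^ 2 + (1 - θ) / θ * ‖(x - z) - (T x - T z)‖ ^ 2 ≤ ‖x - z‖ ^ 2 := by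
  rw [isAveraged_iff_lipschitzWith hθ.ne', lipschitzWith_iff_norm_sub_le]
  refine forall₂_congr fun x z ↦ ?_
  rw [NNReal.coe_one, one_mul, show (1 - θ) / θ = θ⁻¹ - 1 by field_simp,
    ← norm_add_smul_sub_le_iff (inv_pos.2 hθ)]
  congr! 2
  module

theorem mul_div_add_mul_norm_add_sq_le {p q : ℝ} (hp : 0 < p) (hq : 0 < q) (a b : E) :
    p * q / (p + q) * ‖a + b‖ ^ 2 ≤ p * ‖a‖ ^ 2 + q * ‖b‖ ^ 2 := by
  have hsq : ‖p • a - q • b‖ ^ 2 = p ^ 2 * ‖a‖ ^ 2 - 2 * (p * q) * ⟪a, b⟫ + q ^ 2 * ‖b‖ ^ 2 := by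
    rw [norm_sub_sq_real, real_inner_smul_left, real_inner_smul_right, norm_smul, norm_smul,
      mul_pow, mul_pow, Real.norm_eq_abs, Real.norm_eq_abs, sq_abs, sq_abs]
    ring
  rw [div_mul_eq_mul_div, div_le_iff₀ (by positivity), norm_add_sq_real]
  nlinarith [sq_nonneg ‖p • a - q • b‖]

theorem IsAveraged.comp {θ₁ θ₂ : ℝ} (h₁θ₀ : 0 < θ₁) (h₁θ₁ : θ₁ < 1) (h₂θ₀ : 0 < θ₂) (h₂θ₁ : θ₂ < 1)
    {T₁ T₂ : E → E} (h₁ : IsAveraged θ₁ T₁) (h₂ : IsAveraged θ₂ T₂) :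
    IsAveraged ((θ₁ + θ₂ - 2 * θ₁ * θ₂) / (1 - θ₁ * θ₂)) (T₁ ∘ T₂) := by
  have hnum : 0 < θ₁ + θ₂ - 2 * θ₁ * θ₂ := by nlinarith
  have hden : 0 < 1 - θ₁ * θ₂ := by nlinarith
  rw [isAveraged_iff_norm_sq (div_pos hnum hden)]
  set θ := (θ₁ + θ₂ - 2 * θ₁ * θ₂) / (1 - θ₁ * θ₂) with hθ
  have hκ : (1 - θ) / θ
      = (1 - θ₂) / θ₂ * ((1 - θ₁) / θ₁) / ((1 - θ₂) / θ₂ + (1 - θ₁) / θ₁) := by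
    rw [hθ]
    field_simp
    ring
  rw [isAveraged_iff_norm_sq h₁θ₀] at h₁
  rw [isAveraged_iff_norm_sq h₂θ₀] at h₂
  intro x z
  have hres := mul_div_add_mul_norm_add_sq_le (div_pos (sub_pos.2 h₂θ₁) h₂θ₀)
    (div_pos (sub_pos.2 h₁θ₁) h₁θ₀) ((x - z) - (T₂ x - T₂ z))
    ((T₂ x - T₂ z) - (T₁ (T₂ x) - T₁ (T₂ z)))
  rw [sub_add_sub_cancel, ← hκ] at hres
  simp only [Function.comp_apply]
  linarith [h₁ (T₂ x) (T₂ z), h₂ x z]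

end InnerProductSpace

section Hilbert

variable {E F : Type*} [NormedAddCommGroup E] [InnerProductSpace ℝ E] [CompleteSpace E]
  [NormedAddCommGroup F] [InnerProductSpace ℝ F] [CompleteSpace F]

theorem sq_norm_adjoint_comp_self_apply_le (A : E →L[ℝ] F) (u : E) :
    ‖(A† ∘L A) u‖ ^ 2 ≤ ‖A† ∘L A‖ * ‖A u‖ ^ 2 := by
  rw [ContinuousLinearMap.norm_adjoint_comp_self, ContinuousLinearMap.comp_apply]
  calc ‖(A†) (A u)‖ ^ 2 ≤ (‖A†‖ * ‖A u‖) ^ 2 := by gcongr; exact (A†).le_opNorm _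
    _ = ‖A‖ * ‖A‖ * ‖A u‖ ^ 2 := by rw [LinearIsometryEquiv.norm_map]; ring

theorem norm_sub_two_smul_adjoint_comp_self_le (A : E →L[ℝ] F) {τ : ℝ} (hτ₀ : 0 ≤ τ)
    (hτ : τ * ‖A† ∘L A‖ ≤ 1) (u : E) : ‖u - (2 * τ) • (A† ∘L A) u‖ ≤ ‖u‖ := by
  have hinner : ⟪u, (A† ∘L A) u⟫ = ‖A u‖ ^ 2 := by
    rw [ContinuousLinearMap.comp_apply, ContinuousLinearMap.adjoint_inner_right,
      real_inner_self_eq_norm_sq]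
  have hS : τ * ‖(A† ∘L A) u‖ ^ 2 ≤ ‖A u‖ ^ 2 :=
    calc τ * ‖(A† ∘L A) u‖ ^ 2 ≤ τ * (‖A† ∘L A‖ * ‖A u‖ ^ 2) := by
          gcongr; exact sq_norm_adjoint_comp_self_apply_le A u
      _ ≤ ‖A u‖ ^ 2 := by rw [← mul_assoc]; exact mul_le_of_le_one_left (sq_nonneg _) hτ
  rw [← sq_le_sq₀ (norm_nonneg _) (norm_nonneg _), norm_sub_sq_real, real_inner_smul_right,
    hinner, norm_smul, mul_pow, Real.norm_eq_abs, sq_abs]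
  nlinarith

theorem isAveraged_half_gradient_step (A : E →L[ℝ] F) (y : F) {τ : ℝ} (hτ₀ : 0 ≤ τ)
    (hτ : τ * ‖A† ∘L A‖ ≤ 1) : IsAveraged (1 / 2) (fun x ↦ x - τ • (A†) (A x - y)) := by
  rw [isAveraged_iff_lipschitzWith (by norm_num), lipschitzWith_iff_norm_sub_le]
  intro x z
  have hdiff : (x + (1 / 2 : ℝ)⁻¹ • ((x - τ • (A†) (A x - y)) - x))
      - (z + (1 / 2 : ℝ)⁻¹ • ((z - τ • (A†) (A z - y)) - z))
      = (x - z) - (2 * τ) • (A† ∘L A) (x - z) := by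
    simp only [ContinuousLinearMap.comp_apply, map_sub]
    module
  rw [hdiff, NNReal.coe_one, one_mul]
  exact norm_sub_two_smul_adjoint_comp_self_le A hτ₀ hτ _

end Hilbert

/-- Under the stepsize condition `0 < τ ≤ 1/‖AᵀA‖`, with `D` nonexpansive and
`δ² > 1`, the PnP-PGD operator `T_δ = D_δ ∘ G` is `δ²/(2δ² − 1)`-averaged, with
`δ²/(2δ² − 1) ∈ (0,1)`. -/
theorem Tdelta_averaged
    (n m : ℕ) (A : EuclideanSpace ℝ (Fin n) →L[ℝ] EuclideanSpace ℝ (Fin m))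
    (y : EuclideanSpace ℝ (Fin m)) (τ : ℝ)
    (hτ₀ : 0 < τ) (hτ : τ ≤ 1 / ‖(ContinuousLinearMap.adjoint A).comp A‖)
    (D : EuclideanSpace ℝ (Fin n) → EuclideanSpace ℝ (Fin n))
    (hD : LipschitzWith 1 D)
    (δ : ℝ) (hδ : 1 < δ ^ 2)
    (Dδ G Tδ : EuclideanSpace ℝ (Fin n) → EuclideanSpace ℝ (Fin n))
    (hDδ : ∀ x, Dδ x = x + (δ ^ 2)⁻¹ • (D x - x))
    (hG : ∀ x, G x = x - τ • (ContinuousLinearMap.adjoint A) (A x - y))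
    (hT : Tδ = Dδ ∘ G) :
    δ ^ 2 / (2 * δ ^ 2 - 1) ∈ Set.Ioo (0:ℝ) 1 ∧
    ∃ R : EuclideanSpace ℝ (Fin n) → EuclideanSpace ℝ (Fin n),
      LipschitzWith 1 R ∧ ∀ x,
        Tδ x = (1 - δ ^ 2 / (2 * δ ^ 2 - 1)) • x + (δ ^ 2 / (2 * δ ^ 2 - 1)) • R x := by
  have hden : 0 < 2 * δ ^ 2 - 1 := by linarith
  have hθ : δ ^ 2 / (2 * δ ^ 2 - 1) ∈ Set.Ioo (0:ℝ) 1 :=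
    ⟨div_pos (by linarith) hden, (div_lt_one hden).2 (by linarith)⟩
  have hτS : τ * ‖A† ∘L A‖ ≤ 1 := by
    rcases (norm_nonneg (A† ∘L A)).eq_or_lt with h | h
    · simp [← h]
    · rwa [le_div_iff₀ h] at hτ
  have hDδ_avg : IsAveraged (δ ^ 2)⁻¹ Dδ := funext hDδ ▸ isAveraged_relaxation hD _
  have hG_avg : IsAveraged (1 / 2) G := funext hG ▸ isAveraged_half_gradient_step A y hτ₀.le hτS
  have hT_avg := hDδ_avg.comp (inv_pos.2 (by linarith)) (inv_lt_one_of_one_lt₀ hδ) (by norm_num)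
    (by norm_num) hG_avg
  have hθ_eq : ((δ ^ 2)⁻¹ + 1 / 2 - 2 * (δ ^ 2)⁻¹ * (1 / 2)) / (1 - (δ ^ 2)⁻¹ * (1 / 2))
      = δ ^ 2 / (2 * δ ^ 2 - 1) := by
    have hδ0 : δ ≠ 0 := by rintro rfl; norm_num at hδ
    field_simp
    ring
  rw [hθ_eq, ← hT] at hT_avg
  exact ⟨hθ, hT_avg⟩
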